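/- Let v(x,y,z) = (x²−y²−z²+1, 2xy+2z, 2xz−2y)/(x²+y²+z²+1) on ℝ³. Then the Jacobian matrix Dv at a point (x,y,0) equals 2/(1+x²+y²)² times the matrix A with rows (2xy², −2y(1+x²), 0), (y(1−x²+y²), x(1+x²−y²), 1+x²+y²), (2xy, −(1+x²−y²), x(1+x²+y²)), and the eigenvalues of A are 0 and (1+x²+y²)(x ± i); in particular, 0 is the only real eigenvalue of Dv at (x,y,0). -/

import Mathlib

/-- The point `(a,b,c)` of Euclidean 3-space. -/
noncomputable def pt3 (a b c : ℝ) : EuclideanSpace ℝ (Fin 3) :=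
  (WithLp.equiv 2 (Fin 3 → ℝ)).symm ![a, b, c]

/-- The stereographic projection of the Hopf vector field:
`v(x,y,z) = (x²−y²−z²+1, 2xy+2z, 2xz−2y)/(x²+y²+z²+1)`. -/
noncomputable def hopfField (p : EuclideanSpace ℝ (Fin 3)) : EuclideanSpace ℝ (Fin 3) :=
  ((p 0) ^ 2 + (p 1) ^ 2 + (p 2) ^ 2 + 1)⁻¹ •
    pt3 ((p 0) ^ 2 - (p 1) ^ 2 - (p 2) ^ 2 + 1)
      (2 * p 0 * p 1 + 2 * p 2)
      (2 * p 0 * p 2 - 2 * p 1)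

/-!
Along a line `t ↦ p + t • u` every component of `hopfField` is a rational function of `t`, so
its Jacobian at `(x, y, 0)` follows from the one-variable quotient rule. With
`s = 1 + x² + y²`, the characteristic polynomial of `A` is `X (X² - 2xs X + s²(x² + 1))`, whose
quadratic factor is `(X - xs)² + s²`: over `ℂ` it splits as `(X - s(x + i))(X - s(x - i))`, and it
has no real root. Since the Jacobian is the nonzero multiple `(2 / s²) • A`, its real spectrum
is `{0}` as well.
-/

open Polynomial

section PiLp

variable {𝕜 ι H : Type*} {E : ι → Type*} [NontriviallyNormedField 𝕜]
  [∀ i, NormedAddCommGroup (E i)] [∀ i, NormedSpace 𝕜 (E i)] [NormedAddCommGroup H]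
  [NormedSpace 𝕜 H] [Fintype ι] {p : ENNReal} [Fact (1 ≤ p)]

@[fun_prop]
theorem PiLp.differentiable_apply (i : ι) : Differentiable 𝕜 (fun f : PiLp p E => f i) :=
  fun f => (PiLp.hasFDerivAt_apply p f i).differentiableAt

theorem fderiv_piLp_apply {f : H → PiLp p E} {y : H} (hf : DifferentiableAt 𝕜 f y) (v : H)
    (i : ι) : fderiv 𝕜 f y v i = fderiv 𝕜 (fun x => f x i) y v := by
  have h : HasFDerivAt (fun x => f x i) ((PiLp.proj p E i).comp (fderiv 𝕜 f y)) y :=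
    (PiLp.proj p E i : PiLp p E →L[𝕜] E i).hasFDerivAt.comp y hf.hasFDerivAt
  rw [h.fderiv]
  rfl

end PiLp

theorem Polynomial.X_sub_C_mul_X_sub_C {R : Type*} [CommRing R] (a b : R) :
    (X - C a) * (X - C b) = X ^ 2 - C (a + b) * X + C (a * b) := by
  simp only [map_add, map_mul]
  ring

@[simp] theorem pt3_apply_zero (a b c : ℝ) : pt3 a b c 0 = a := rfl
@[simp] theorem pt3_apply_one (a b c : ℝ) : pt3 a b c 1 = b := rfl
@[simp] theorem pt3_apply_two (a b c : ℝ) : pt3 a b c 2 = c := rfl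

/-- The matrix `A` of the paper, `Dv(x, y, 0) = 2 / (1 + x² + y²)² • A`. -/
def hopfMatrix (x y : ℝ) : Matrix (Fin 3) (Fin 3) ℝ :=
  !![2 * x * y ^ 2, -2 * y * (1 + x ^ 2), 0;
     y * (1 - x ^ 2 + y ^ 2), x * (1 + x ^ 2 - y ^ 2), 1 + x ^ 2 + y ^ 2;
     2 * x * y, -(1 + x ^ 2 - y ^ 2), x * (1 + x ^ 2 + y ^ 2)]

section HopfField

local notation "E3" => EuclideanSpace ℝ (Fin 3)

theorem hopfField_apply_zero (q : E3) :
    hopfField q 0 = (q 0 ^ 2 + q 1 ^ 2 + q 2 ^ 2 + 1)⁻¹ * (q 0 ^ 2 - q 1 ^ 2 - q 2 ^ 2 + 1) :=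
  rfl

theorem hopfField_apply_one (q : E3) :
    hopfField q 1 = (q 0 ^ 2 + q 1 ^ 2 + q 2 ^ 2 + 1)⁻¹ * (2 * q 0 * q 1 + 2 * q 2) :=
  rfl

theorem hopfField_apply_two (q : E3) :
    hopfField q 2 = (q 0 ^ 2 + q 1 ^ 2 + q 2 ^ 2 + 1)⁻¹ * (2 * q 0 * q 2 - 2 * q 1) :=
  rfl

theorem differentiable_hopfField : Differentiable ℝ hopfField := by
  refine (differentiable_piLp 2).2 fun i => ?_
  fin_cases i <;>
    simp only [Fin.zero_eta, Fin.mk_one, Fin.reduceFinMk, hopfField_apply_zero,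
      hopfField_apply_one, hopfField_apply_two] <;>
    fun_prop (disch := intro; positivity)

theorem fderiv_hopfField_apply (x y : ℝ) (u : E3) (i : Fin 3) :
    fderiv ℝ hopfField (pt3 x y 0) u i =
      (2 / (1 + x ^ 2 + y ^ 2) ^ 2) * (hopfMatrix x y).mulVec u.ofLp i := by
  rw [fderiv_piLp_apply (differentiable_hopfField _),
    ← ((differentiable_piLp 2).1 differentiable_hopfField i _).lineDeriv_eq_fderiv, lineDeriv]
  fin_cases i <;>
    simp only [Fin.zero_eta, Fin.mk_one, Fin.reduceFinMk, hopfField_apply_zero,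
      hopfField_apply_one, hopfField_apply_two, PiLp.add_apply, PiLp.smul_apply, smul_eq_mul,
      pt3_apply_zero, pt3_apply_one, pt3_apply_two, hopfMatrix, Matrix.mulVec, dotProduct,
      Fin.sum_univ_three, Matrix.of_apply, Matrix.cons_val', Matrix.cons_val_fin_one,
      Matrix.cons_val_zero, Matrix.cons_val_one, Matrix.cons_val] <;>
    simp (disch := first | positivity | fun_prop (disch := positivity)) only [deriv_fun_mul,
      deriv_fun_inv'', deriv_fun_add, deriv_fun_sub, deriv_fun_pow, deriv_const', deriv_id''] <;>
    field_simp <;>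
    ring

theorem fderiv_hopfField_eq_toLpLin (x y : ℝ) :
    (fderiv ℝ hopfField (pt3 x y 0) : E3 →ₗ[ℝ] E3) =
      Matrix.toLpLin 2 2 ((2 / (1 + x ^ 2 + y ^ 2) ^ 2) • hopfMatrix x y) := by
  ext u i
  simp [fderiv_hopfField_apply]

end HopfField

theorem hopfMatrix_charpoly (x y : ℝ) :
    (hopfMatrix x y).charpoly =
      X * (X ^ 2 - C (2 * x * (1 + x ^ 2 + y ^ 2)) * X +
        C ((1 + x ^ 2 + y ^ 2) ^ 2 * (x ^ 2 + 1))) := by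
  rw [Matrix.charpoly, Matrix.det_fin_three]
  simp only [Matrix.charmatrix_apply_eq, Matrix.charmatrix_apply_ne, ne_eq, Fin.reduceEq,
    not_false_eq_true, hopfMatrix, Matrix.of_apply, Matrix.cons_val', Matrix.cons_val_zero,
    Matrix.cons_val_one, Matrix.cons_val, Matrix.cons_val_fin_one, map_add, map_sub, map_mul,
    map_neg, map_pow, map_one, map_zero, C_ofNat]
  ring

theorem spectrum_hopfMatrix (x y : ℝ) : spectrum ℝ (hopfMatrix x y) = {0} := by
  ext ν
  have hquad : ν ^ 2 - 2 * x * (1 + x ^ 2 + y ^ 2) * ν + (1 + x ^ 2 + y ^ 2) ^ 2 * (x ^ 2 + 1)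
      ≠ 0 := by
    have hs : 0 < 1 + x ^ 2 + y ^ 2 := by positivity
    nlinarith [sq_nonneg (ν - x * (1 + x ^ 2 + y ^ 2))]
  simp [Matrix.mem_spectrum_iff_isRoot_charpoly, hopfMatrix_charpoly, hquad]

theorem hopfMatrix_map_ofReal_charpoly (x y : ℝ) :
    ((hopfMatrix x y).map Complex.ofReal).charpoly =
      X * (X - C (((1 : ℂ) + x ^ 2 + y ^ 2) * (x + Complex.I))) *
        (X - C (((1 : ℂ) + x ^ 2 + y ^ 2) * (x - Complex.I))) := by
  rw [mul_assoc, X_sub_C_mul_X_sub_C]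
  refine (Matrix.charpoly_map (hopfMatrix x y) Complex.ofRealHom).trans ?_
  rw [hopfMatrix_charpoly]
  simp only [Polynomial.map_mul, Polynomial.map_add, Polynomial.map_sub, Polynomial.map_pow,
    map_X, map_C, Complex.ofRealHom_eq_coe]
  congr 5
  · push_cast
    ring
  · push_cast
    linear_combination (1 + (x : ℂ) ^ 2 + y ^ 2) ^ 2 * Complex.I_sq

open Polynomial in
/-- At a point `(x,y,0)` the Jacobian of the stereographically projected Hopf field equals
`2/(1+x²+y²)²` times the matrix `A` below, the eigenvalues of `A` over `ℂ` are `0` and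
`(1+x²+y²)(x ± i)`, and in particular `0` is the only real eigenvalue of the Jacobian. -/
theorem hopfField_jacobian_eigenvalues (x y : ℝ) :
    (∀ u : EuclideanSpace ℝ (Fin 3), ∀ i : Fin 3,
      fderiv ℝ hopfField (pt3 x y 0) u i =
        (2 / (1 + x ^ 2 + y ^ 2) ^ 2) *
          (Matrix.mulVec
            !![2 * x * y ^ 2, -2 * y * (1 + x ^ 2), 0;
               y * (1 - x ^ 2 + y ^ 2), x * (1 + x ^ 2 - y ^ 2), 1 + x ^ 2 + y ^ 2;
               2 * x * y, -(1 + x ^ 2 - y ^ 2), x * (1 + x ^ 2 + y ^ 2)]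
            (fun j => u j)) i) ∧
    (Matrix.charpoly
        ((!![2 * x * y ^ 2, -2 * y * (1 + x ^ 2), 0;
             y * (1 - x ^ 2 + y ^ 2), x * (1 + x ^ 2 - y ^ 2), 1 + x ^ 2 + y ^ 2;
             2 * x * y, -(1 + x ^ 2 - y ^ 2), x * (1 + x ^ 2 + y ^ 2)]).map
          (Complex.ofReal)) =
      X * (X - C (((1 : ℂ) + x ^ 2 + y ^ 2) * (x + Complex.I))) *
        (X - C (((1 : ℂ) + x ^ 2 + y ^ 2) * (x - Complex.I)))) ∧
    (∀ μ : ℝ,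
      Module.End.HasEigenvalue
        (↑(fderiv ℝ hopfField (pt3 x y 0)) :
          EuclideanSpace ℝ (Fin 3) →ₗ[ℝ] EuclideanSpace ℝ (Fin 3)) μ ↔ μ = 0) := by
  refine ⟨fderiv_hopfField_apply x y, hopfMatrix_map_ofReal_charpoly x y, fun μ => ?_⟩
  rw [Module.End.hasEigenvalue_iff_mem_spectrum, fderiv_hopfField_eq_toLpLin,
    Matrix.spectrum_toLpLin, spectrum.smul_eq_smul _ _ (by simp [spectrum_hopfMatrix]),
    spectrum_hopfMatrix, Set.smul_set_singleton, smul_zero, Set.mem_singleton_iff]
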